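/- Energy stability of the BDF2 scheme in an abstract Hilbert space: let H be a real Hilbert space, A : H → H a bounded linear self-adjoint positive semidefinite operator, τ > 0, and suppose a sequence (xⁿ) ⊂ H satisfies ⟨(3xⁿ⁺¹ − 4xⁿ + xⁿ⁻¹)/(2τ), xⁿ⁺¹⟩ + ⟨A xⁿ⁺¹, xⁿ⁺¹⟩ ≤ 0 for all n ≥ 1. Then the quantity Eⁿ⁺¹ = ‖xⁿ⁺¹‖² + ‖2xⁿ⁺¹ − xⁿ‖² satisfies Eⁿ⁺¹ ≤ Eⁿ for all n ≥ 1. -/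
import Mathlib

open RealInnerProductSpace

lemma bdf2_identity {H : Type*} [NormedAddCommGroup H] [InnerProductSpace ℝ H]
    (a b c : H) :
    2 * ⟪(3 : ℝ) • a - (4 : ℝ) • b + c, a⟫ =
      ‖a‖ ^ 2 - ‖b‖ ^ 2 + (‖(2:ℝ) • a - b‖ ^ 2 - ‖(2:ℝ) • b - c‖ ^ 2)
        + ‖a - (2:ℝ) • b + c‖ ^ 2 := by
  simp only [← real_inner_self_eq_norm_sq, inner_sub_left, inner_sub_right,
    inner_add_left, inner_add_right, real_inner_smul_left, real_inner_smul_right,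
    real_inner_comm a b, real_inner_comm a c, real_inner_comm b c]
  ring

/-- Abstract energy stability of the BDF2 scheme in a real Hilbert space: if `A` is a
bounded self-adjoint positive-semidefinite operator, `τ > 0`, and the sequence `(xⁿ)`
satisfies `⟨(3xⁿ⁺¹ − 4xⁿ + xⁿ⁻¹)/(2τ), xⁿ⁺¹⟩ + ⟨Axⁿ⁺¹, xⁿ⁺¹⟩ ≤ 0` for all `n ≥ 1`,
then `Eⁿ⁺¹ = ‖xⁿ⁺¹‖² + ‖2xⁿ⁺¹ − xⁿ‖²` is nonincreasing for `n ≥ 1`. -/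
theorem bdf2_abstract_energy_stability {H : Type*}
    [NormedAddCommGroup H] [InnerProductSpace ℝ H] [CompleteSpace H]
    (A : H →L[ℝ] H) (hA : IsSelfAdjoint A)
    (hApos : ∀ y : H, 0 ≤ ⟪A y, y⟫)
    (τ : ℝ) (hτ : 0 < τ) (x : ℕ → H)
    (hrec : ∀ n, 1 ≤ n →
      ⟪(2 * τ)⁻¹ • ((3 : ℝ) • x (n + 1) - (4 : ℝ) • x n + x (n - 1)), x (n + 1)⟫
        + ⟪A (x (n + 1)), x (n + 1)⟫ ≤ 0) :
    ∀ n, 1 ≤ n →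
      ‖x (n + 1)‖ ^ 2 + ‖(2 : ℝ) • x (n + 1) - x n‖ ^ 2 ≤
        ‖x n‖ ^ 2 + ‖(2 : ℝ) • x n - x (n - 1)‖ ^ 2 := by
  intro n hn
  have h := hrec n hn
  have hApos' := hApos (x (n + 1))
  have hinner : ⟪(3 : ℝ) • x (n + 1) - (4 : ℝ) • x n + x (n - 1), x (n + 1)⟫ ≤ 0 := by
    rw [real_inner_smul_left] at h
    nlinarith [inv_pos.mpr (by linarith : (0:ℝ) < 2 * τ)]
  have hid := bdf2_identity (x (n + 1)) (x n) (x (n - 1))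
  nlinarith [sq_nonneg ‖x (n + 1) - (2:ℝ) • x n + x (n - 1)‖,
    norm_nonneg (x (n + 1) - (2:ℝ) • x n + x (n - 1))]
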